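/- Projections preserve the global distance: for any k ∈ ℕ, if t ⇝_{α,d} t′ then π_k(t) ⇝_{α,d} π_k(t′), obtained by projecting each step of level ≤ k and deleting all steps of level > k. -/
import Mathlib


/-- Finite trees over an action alphabet `A`: finite formal sums `Σᵢ aᵢ·tᵢ`. -/
inductive FTree (A : Type) where
  | node : List (A × FTree A) → FTree A

namespace FTree

variable {A : Type}

/-- The empty tree `0`. -/
def zero : FTree A := node []

/-- Sum of two trees. -/
def add : FTree A → FTree A → FTree A
  | node l, node l' => node (l ++ l')

instance : Add (FTree A) := ⟨add⟩

/-- Prefixing: `a·t`. -/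
def pre (a : A) (t : FTree A) : FTree A := node [(a, t)]

/-- `proj k t` is the `k`-th projection (cut) of `t`: its first `k` levels. -/
def proj : ℕ → FTree A → FTree A
  | 0, _ => node []
  | _+1, node [] => node []
  | k+1, node ((a, t) :: l) =>
      match proj (k+1) (node l) with
      | node l' => node ((a, proj k t) :: l')

end FTree

section Steps

variable {A : Type} [MetricSpace A]

open FTree

/-- One-step transformation (distance step) `t ⇝¹_{α,c} t'`. -/
inductive Step (α : ℝ) : ℝ → FTree A → FTree A → Prop
  | dup (t : FTree A) {c : ℝ} (h : 0 ≤ c) : Step α c t (t + t)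
  | merge (t : FTree A) {c : ℝ} (h : 0 ≤ c) : Step α c (t + t) t
  | relabel {a b : A} (t : FTree A) {c : ℝ} (h : dist a b ≤ c) :
      Step α c (pre a t) (pre b t)
  | addCong {c : ℝ} {t t' : FTree A} (s : FTree A) :
      Step α c t t' → Step α c (t + s) (t' + s)
  | preCong {c : ℝ} {t t' : FTree A} (a : A) :
      Step α c t t' → Step α (α * c) (pre a t) (pre a t')

/-- Finite sequences of distance steps, with total cost. -/
inductive Chain (α : ℝ) : ℝ → FTree A → FTree A → Prop
  | nil (t : FTree A) : Chain α 0 t t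
  | cons {c e : ℝ} {t u v : FTree A} :
      Step α c t u → Chain α e u v → Chain α (c + e) t v

/-- The global distance relation `t ⇝_{α,d} t'`. -/
def GDist (α d : ℝ) (t t' : FTree A) : Prop := ∃ c ≤ d, Chain α c t t'

end Steps


section Aux

variable {A : Type} [MetricSpace A]

open FTree

lemma add_def (l l' : List (A × FTree A)) :
    (node l : FTree A) + node l' = node (l ++ l') := rfl

lemma proj_add : ∀ (k : ℕ) (l l' : List (A × FTree A)),
    proj k (node (l ++ l')) = proj k (node l) + proj k (node l')
  | 0, l, l' => by simp [proj, add_def]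
  | k+1, [], l' => by
      cases h : proj (k+1) (node l') with
      | node m => simp [proj, h, add_def]
  | k+1, (a, t) :: l, l' => by
      have ih := proj_add (k+1) l l'
      cases h1 : proj (k+1) (node l) with
      | node m1 =>
        cases h2 : proj (k+1) (node l') with
        | node m2 =>
          have hl : proj (k+1) (node (l ++ l')) = node (m1 ++ m2) := by
            rw [ih, h1, h2, add_def]
          show proj (k+1) (node ((a,t) :: (l ++ l'))) = _
          simp [proj, hl, h1, h2, add_def]

lemma proj_add' (k : ℕ) (t s : FTree A) :
    proj k (t + s) = proj k t + proj k s := by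
  cases t with | node l => cases s with | node l' => exact proj_add k l l'

lemma proj_pre (k : ℕ) (a : A) (t : FTree A) :
    proj (k+1) (pre a t) = pre a (proj k t) := by
  simp [pre, proj]

lemma proj_zero (t : FTree A) : proj 0 t = FTree.node [] := by simp [proj]

lemma step_nonneg {α c : ℝ} (hα0 : 0 < α) {t t' : FTree A}
    (s : Step α c t t') : 0 ≤ c := by
  induction s with
  | dup t h => exact h
  | merge t h => exact h
  | relabel t h => exact le_trans dist_nonneg h
  | addCong s _ ih => exact ih
  | preCong a _ ih => exact mul_nonneg hα0.le ih

lemma chain_single {α c : ℝ} {t t' : FTree A} (s : Step α c t t') :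
    Chain α c t t' := by
  have := Chain.cons s (Chain.nil t')
  rwa [add_zero] at this

lemma chain_addCong {α c : ℝ} {t t' : FTree A} (s : FTree A)
    (h : Chain α c t t') : Chain α c (t + s) (t' + s) := by
  induction h with
  | nil t => exact Chain.nil _
  | cons st _ ih => exact Chain.cons (Step.addCong s st) ih

lemma chain_preCong {α c : ℝ} {t t' : FTree A} (a : A)
    (h : Chain α c t t') : Chain α (α * c) (pre a t) (pre a t') := by
  induction h with
  | nil t => rw [mul_zero]; exact Chain.nil _
  | cons st ch ih =>
      rw [mul_add]; exact Chain.cons (Step.preCong a st) ih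

lemma chain_trans {α c e : ℝ} {t u v : FTree A}
    (h1 : Chain α c t u) (h2 : Chain α e u v) : Chain α (c + e) t v := by
  induction h1 with
  | nil t => rw [zero_add]; exact h2
  | cons st _ ih => rw [add_assoc]; exact Chain.cons st (ih h2)

lemma step_proj {α c : ℝ} (hα0 : 0 < α) {t t' : FTree A}
    (s : Step α c t t') (k : ℕ) :
    ∃ c', 0 ≤ c' ∧ c' ≤ c ∧ Chain α c' (proj k t) (proj k t') := by
  induction s generalizing k with
  | @dup t c h =>
      refine ⟨c, h, le_refl _, ?_⟩
      rw [proj_add']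
      exact chain_single (Step.dup _ h)
  | @merge t c h =>
      refine ⟨c, h, le_refl _, ?_⟩
      rw [proj_add']
      exact chain_single (Step.merge _ h)
  | @relabel a b t c h =>
      have hc : 0 ≤ c := le_trans dist_nonneg h
      cases k with
      | zero => exact ⟨0, le_refl _, hc, by rw [proj_zero, proj_zero]; exact Chain.nil _⟩
      | succ k =>
          refine ⟨c, hc, le_refl _, ?_⟩
          rw [proj_pre, proj_pre]
          exact chain_single (Step.relabel _ h)
  | @addCong c t t' s st ih =>
      obtain ⟨c', h0, hle, ch⟩ := ih k
      exact ⟨c', h0, hle, by rw [proj_add', proj_add']; exact chain_addCong _ ch⟩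
  | @preCong c t t' a st ih =>
      cases k with
      | zero =>
          exact ⟨0, le_refl _, mul_nonneg hα0.le (step_nonneg hα0 st),
            by rw [proj_zero, proj_zero]; exact Chain.nil _⟩
      | succ k =>
          obtain ⟨c', h0, hle, ch⟩ := ih k
          refine ⟨α * c', mul_nonneg hα0.le h0,
            mul_le_mul_of_nonneg_left hle hα0.le, ?_⟩
          rw [proj_pre, proj_pre]; exact chain_preCong a ch

lemma chain_proj {α c : ℝ} (hα0 : 0 < α) {t t' : FTree A}
    (h : Chain α c t t') (k : ℕ) :
    ∃ c', c' ≤ c ∧ Chain α c' (proj k t) (proj k t') := by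
  induction h with
  | nil t => exact ⟨0, le_refl _, Chain.nil _⟩
  | @cons c e t u v st ch ih =>
      obtain ⟨c1, _, h1, ch1⟩ := step_proj hα0 st k
      obtain ⟨c2, h2, ch2⟩ := ih
      exact ⟨c1 + c2, add_le_add h1 h2, chain_trans ch1 ch2⟩

end Aux

/-- projections preserve the global distance. -/
theorem gdist_proj {A : Type} [MetricSpace A] {α : ℝ}
    (hα0 : 0 < α) (hα1 : α ≤ 1) {d : ℝ} {t t' : FTree A}
    (k : ℕ) (h : GDist α d t t') :
    GDist α d (FTree.proj k t) (FTree.proj k t') := by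
  obtain ⟨c, hcd, ch⟩ := h
  obtain ⟨c', hc', ch'⟩ := chain_proj hα0 ch k
  exact ⟨c', le_trans hc' hcd, ch'⟩
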